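/- arXiv:1505.06145 — 2 statements merged into one kernel-verified Lean document; each statement's English description precedes it below -/
import Mathlib

section
/- Let (X,d) be a metric space whose underlying set X is finite and nonempty, let T be a tree on X, and let w assign a positive length to each edge of T. Suppose T realises d, i.e., for all x,y ∈ X, d(x,y) equals the sum of w over the edges of the unique path in T joining x and y. Then the edge set of T is exactly the set of basic edges of (X,d), and w({a,b}) = d(a,b) for every edge {a,b} of T. In particular, T is the unique positively weighted fully labelled tree on X realising d. -/
/-- A chain of intermediate points witnessing that the pair `{x, x'}` is non-basic:
`k ≥ 1` pairwise distinct intermediate points, each different from `x` and `x'`,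
along which the distances sum to `dist x x'`. -/
def IsNonBasicChain {X : Type*} [MetricSpace X] (x x' : X) : Prop :=
  ∃ (k : ℕ) (p : Fin (k + 2) → X), 1 ≤ k ∧ Function.Injective p ∧
    p 0 = x ∧ p (Fin.last (k + 1)) = x' ∧
    dist x x' = ∑ i : Fin (k + 1), dist (p i.castSucc) (p i.succ)

/-- The unordered pair `{x, x'}` is a non-basic edge. -/
def IsNonBasicEdge {X : Type*} [MetricSpace X] (x x' : X) : Prop :=
  IsNonBasicChain x x' ∨ IsNonBasicChain x' x

/-- The unordered pair `{x, x'}` is a basic edge. -/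
def IsBasicEdge {X : Type*} [MetricSpace X] (x x' : X) : Prop :=
  x ≠ x' ∧ ¬ IsNonBasicEdge x x'


/-!
Since `T` realises `d`, every edge `{a, b}` has weight `d(a, b)`, so the distance between two
points is the sum of the distances between consecutive vertices of the tree path joining them;
for non-adjacent points the interior of that path is a non-basic chain. Conversely, if `{x, x'}`
is an edge and `y` is the first intermediate point of a chain from `x` to `x'`, the triangle
inequality gives `d(x, y) + d(y, x') ≤ d(x, x')`. The tree paths `x → y → x'` then form a walk of
weight at most `w {x, x'}`; by acyclicity this walk uses the edge `{x, x'}`, and since all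
weights are positive it is that edge alone, so `y ∈ {x, x'}`.
-/

theorem dist_le_sum_dist_fin {X : Type*} [PseudoMetricSpace X] :
    ∀ {n : ℕ} (p : Fin (n + 1) → X),
      dist (p 0) (p (Fin.last n)) ≤ ∑ i : Fin n, dist (p i.castSucc) (p i.succ)
  | 0, p => by simp
  | n + 1, p => by
    rw [Fin.sum_univ_castSucc]
    calc dist (p 0) (p (Fin.last (n + 1)))
        ≤ dist (p 0) (p (Fin.last n).castSucc)
            + dist (p (Fin.last n).castSucc) (p (Fin.last n).succ) := dist_triangle _ _ _
      _ ≤ _ := by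
        gcongr
        simpa using dist_le_sum_dist_fin (p ∘ Fin.castSucc)

theorem IsNonBasicChain.exists_dist_add_dist_le {X : Type*} [MetricSpace X] {x x' : X}
    (h : IsNonBasicChain x x') : ∃ y, y ≠ x ∧ y ≠ x' ∧ dist x y + dist y x' ≤ dist x x' := by
  obtain ⟨k, p, hk, hinj, rfl, rfl, hsum⟩ := h
  refine ⟨p 1, hinj.ne (by simp), hinj.ne (by simp [Fin.ext_iff]; omega), ?_⟩
  have htail := dist_le_sum_dist_fin (p ∘ Fin.succ)
  simp only [Function.comp_apply, Fin.succ_zero_eq_one, Fin.succ_last] at htail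
  rw [hsum, Fin.sum_univ_succ]
  simpa using htail

namespace SimpleGraph

variable {V : Type*} {G : SimpleGraph V} {u v : V}

theorem Walk.sum_map_edges_eq_sum_range {M : Type*} [AddCommMonoid M] (f : Sym2 V → M) :
    ∀ {u v : V} (W : G.Walk u v),
      (W.edges.map f).sum = ∑ i ∈ Finset.range W.length, f s(W.getVert i, W.getVert (i + 1))
  | _, _, .nil => by simp
  | _, _, .cons h W => by
    rw [edges_cons, List.map_cons, List.sum_cons, sum_map_edges_eq_sum_range f W, length_cons,
      Finset.sum_range_succ', add_comm]
    simp only [getVert_cons_succ, getVert_zero]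

theorem IsAcyclic.mem_edges_of_adj [DecidableEq V] (hG : G.IsAcyclic) (h : G.Adj u v)
    (W : G.Walk u v) : s(u, v) ∈ W.edges := by
  have : W.bypass = h.toWalk :=
    congrArg Subtype.val <|
      (hG.subsingleton_path u v).elim ⟨W.bypass, W.bypass_isPath⟩ ⟨h.toWalk, by simp [h.ne]⟩
  exact W.edges_bypass_subset_edges (by simp [this])

theorem IsAcyclic.length_eq_one_of_sum_le {w : Sym2 V → ℝ} (hG : G.IsAcyclic)
    (hw : ∀ e ∈ G.edgeSet, 0 < w e) (h : G.Adj u v) (W : G.Walk u v)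
    (hW : (W.edges.map w).sum ≤ w s(u, v)) : W.length = 1 := by
  classical
  have hmem := hG.mem_edges_of_adj h W
  have hrest : W.edges.erase s(u, v) = [] := by
    by_contra hne
    have hpos : 0 < ((W.edges.erase s(u, v)).map w).sum :=
      List.sum_pos _ (by
        simp only [List.mem_map]
        rintro _ ⟨e, he, rfl⟩
        exact hw e (W.edges_subset_edgeSet (List.mem_of_mem_erase he))) (by simpa using hne)
    linarith [List.sum_map_erase w hmem]
  simpa [hrest] using (List.length_erase_add_one hmem).symm

theorem IsAcyclic.mem_of_mem_support_of_sum_le {w : Sym2 V → ℝ} (hG : G.IsAcyclic)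
    (hw : ∀ e ∈ G.edgeSet, 0 < w e) (h : G.Adj u v) (W : G.Walk u v)
    (hW : (W.edges.map w).sum ≤ w s(u, v)) {y : V} (hy : y ∈ W.support) : y = u ∨ y = v := by
  have hlen := hG.length_eq_one_of_sum_le hw h W hW
  obtain ⟨n, rfl, hn⟩ := Walk.mem_support_iff_exists_getVert.1 hy
  rw [hlen] at hn
  interval_cases n
  · exact Or.inl W.getVert_zero
  · exact Or.inr (hlen ▸ W.getVert_length)

end SimpleGraph

def RealisesMetric {X : Type*} [MetricSpace X] (T : SimpleGraph X) (w : Sym2 X → ℝ) : Prop :=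
  ∀ (x y : X) (W : T.Walk x y), W.IsPath → (W.edges.map w).sum = dist x y

namespace RealisesMetric

open SimpleGraph (Walk)

variable {X : Type*} [MetricSpace X] {T : SimpleGraph X} {w : Sym2 X → ℝ}

theorem weight_eq_dist (hT : RealisesMetric T w) {a b : X} (h : T.Adj a b) :
    w s(a, b) = dist a b := by
  simpa using hT a b h.toWalk (by simp [h.ne])

theorem exists_isPath (hT : RealisesMetric T w) (hc : T.Connected) (x y : X) :
    ∃ P : T.Walk x y, P.IsPath ∧ (P.edges.map w).sum = dist x y := by
  classical
  obtain ⟨W⟩ := hc.preconnected x y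
  exact ⟨W.bypass, W.bypass_isPath, hT x y _ W.bypass_isPath⟩

theorem not_isNonBasicChain (hT : RealisesMetric T w) (htree : T.IsTree)
    (hw : ∀ e ∈ T.edgeSet, 0 < w e) {x x' : X} (h : T.Adj x x') : ¬IsNonBasicChain x x' := by
  intro hchain
  obtain ⟨y, hyx, hyx', hle⟩ := hchain.exists_dist_add_dist_le
  obtain ⟨W₁, -, hW₁⟩ := hT.exists_isPath htree.connected x y
  obtain ⟨W₂, -, hW₂⟩ := hT.exists_isPath htree.connected y x'
  have hsum : ((W₁.append W₂).edges.map w).sum ≤ w s(x, x') := by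
    simpa [Walk.edges_append, hW₁, hW₂, hT.weight_eq_dist h] using hle
  have hy : y ∈ (W₁.append W₂).support :=
    (Walk.mem_support_append_iff _ _).2 (Or.inl W₁.end_mem_support)
  rcases htree.isAcyclic.mem_of_mem_support_of_sum_le hw h _ hsum hy with rfl | rfl
  exacts [hyx rfl, hyx' rfl]

theorem isNonBasicChain_of_not_adj (hT : RealisesMetric T w) (hc : T.Connected) {a b : X}
    (hne : a ≠ b) (hna : ¬T.Adj a b) : IsNonBasicChain a b := by
  obtain ⟨P, hP, hPsum⟩ := hT.exists_isPath hc a b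
  obtain ⟨k, hk⟩ : ∃ k, P.length = k + 2 := by
    have h0 : P.length ≠ 0 := fun h => hne (Walk.eq_of_length_eq_zero h)
    have h1 : P.length ≠ 1 := fun h => hna (Walk.adj_of_length_eq_one h)
    exact ⟨P.length - 2, by omega⟩
  refine ⟨k + 1, fun i => P.getVert i, by omega, ?_, P.getVert_zero, ?_, ?_⟩
  · intro i j hij
    exact Fin.ext (hP.getVert_injOn (by simp; omega) (by simp; omega) hij)
  · simp [← hk]
  · rw [← hPsum, Walk.sum_map_edges_eq_sum_range, hk, ← Fin.sum_univ_eq_sum_range]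
    refine Finset.sum_congr rfl fun i _ => ?_
    exact hT.weight_eq_dist (P.adj_getVert_succ (by omega))

end RealisesMetric

theorem realising_tree_is_basic_geodesic_graph_general
    {X : Type*} [MetricSpace X]
    (T : SimpleGraph X) (hT : T.IsTree) (w : Sym2 X → ℝ)
    (hw : ∀ e ∈ T.edgeSet, 0 < w e)
    (hrealise : ∀ (x y : X) (W : T.Walk x y), W.IsPath →
      (W.edges.map w).sum = dist x y) :
    (∀ a b : X, T.Adj a b ↔ IsBasicEdge a b) ∧
    (∀ a b : X, T.Adj a b → w s(a, b) = dist a b) := by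
  have hR : RealisesMetric T w := hrealise
  refine ⟨fun a b => ⟨fun h => ⟨h.ne, ?_⟩, fun ⟨hne, hnb⟩ => ?_⟩, fun a b => hR.weight_eq_dist⟩
  · rintro (hchain | hchain)
    exacts [hR.not_isNonBasicChain hT hw h hchain, hR.not_isNonBasicChain hT hw h.symm hchain]
  · by_contra hna
    exact hnb (Or.inl (hR.isNonBasicChain_of_not_adj hT.connected hne hna))

/-- If a positively weighted tree `T` on `X` realises the metric `d` (the path metric
of `(T, w)` equals `d`), then the edges of `T` are exactly the basic edges of `(X, d)`
and the weight of each edge `{a, b}` is `dist a b`; in particular `T` is the unique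
positively weighted fully labelled tree on `X` realising `d`. -/
theorem realising_tree_is_basic_geodesic_graph
    {X : Type*} [MetricSpace X] [Fintype X] [Nonempty X]
    (T : SimpleGraph X) (hT : T.IsTree) (w : Sym2 X → ℝ)
    (hw : ∀ e ∈ T.edgeSet, 0 < w e)
    (hrealise : ∀ (x y : X) (W : T.Walk x y), W.IsPath →
      (W.edges.map w).sum = dist x y) :
    (∀ a b : X, T.Adj a b ↔ IsBasicEdge a b) ∧
    (∀ a b : X, T.Adj a b → w s(a, b) = dist a b) :=
  realising_tree_is_basic_geodesic_graph_general T hT w hw hrealise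
end

section
/- Let (X,d) be a metric space whose underlying set X is finite and nonempty, and suppose (X,d) satisfies the tie-breaking rule and the fourth-point condition. Then there exists a tree T on X together with positive edge weights w such that for all x,y ∈ X, d(x,y) equals the sum of w over the edges of the unique path in T joining x and y. (A finite median metric space with pairwise distinct distances is realised by a fully labelled positively weighted tree on the same point set.) -/
/-!
Join `x` and `y` by an edge of weight `d(x, y)` when no third point lies metrically between
them. A median `p` of `x, y, z` lies between each two of them, so for an edge `{x, y}` it is
`x` or `y`: every point lies on one of the two sides of the edge. By the tie-breaking rule the
only edge crossing from one side to the other is `{x, y}` itself, since a crossing edge turns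
out to have length `d(x, y)`. Hence every edge is a bridge, and along a path each next vertex
lies between the current one and the endpoint, so its weights add up to the distance.
Connectedness uses only finiteness: split a non-edge at a point in between and recurse.
-/

/-- The fourth-point condition. -/
def FourthPointCondition (X : Type*) [MetricSpace X] : Prop :=
  ∀ x y z : X, ∃ p : X,
    dist x p + dist y p + dist z p = (dist x y + dist y z + dist z x) / 2

/-- The tie-breaking rule: distances of distinct unordered pairs are distinct. -/
def TieBreakingRule (X : Type*) [MetricSpace X] : Prop :=
  ∀ x y u v : X, x ≠ y → u ≠ v → ({x, y} : Set X) ≠ {u, v} → dist x y ≠ dist u v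

theorem FourthPointCondition.exists_median {X : Type*} [MetricSpace X]
    (h4 : FourthPointCondition X) (x y z : X) :
    ∃ p, dist x p + dist p y = dist x y ∧ dist y p + dist p z = dist y z ∧
      dist z p + dist p x = dist z x := by
  obtain ⟨p, hp⟩ := h4 x y z
  have := dist_triangle x p y
  have := dist_triangle y p z
  have := dist_triangle z p x
  refine ⟨p, ?_, ?_, ?_⟩ <;> simp only [dist_comm p] at * <;> linarith

namespace TreeRealisation

variable {X : Type*} [MetricSpace X]

variable (X) in
def betweennessGraph : SimpleGraph X where
  Adj x y := x ≠ y ∧ ∀ p, dist x p + dist p y = dist x y → p = x ∨ p = y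
  symm := ⟨fun x y ⟨hne, h⟩ => ⟨hne.symm, fun p hp => (h p (by
    rw [dist_comm x p, dist_comm p y, dist_comm x y]; linarith)).symm⟩⟩
  loopless := ⟨fun _ h => h.1 rfl⟩

noncomputable def edgeLength : Sym2 X → ℝ :=
  Sym2.lift ⟨dist, dist_comm⟩

lemma eq_or_eq_of_adj_of_between {x y p : X} (h : (betweennessGraph X).Adj x y)
    (hp : dist x p + dist p y = dist x y) : p = x ∨ p = y := by
  obtain ⟨-, h⟩ := h
  exact h p hp

@[simp] lemma edgeLength_mk (x y : X) : edgeLength s(x, y) = dist x y := rfl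

lemma edgeLength_pos : ∀ e ∈ (betweennessGraph X).edgeSet, 0 < edgeLength e := by
  intro e he
  induction e using Sym2.ind with
  | _ x y => exact dist_pos.mpr (SimpleGraph.mem_edgeSet _ |>.mp he).ne

/-- The two disjuncts say that `z` lies on the side of `x`, resp. of `y`, of the edge `{x, y}`. -/
lemma between_or_between_of_adj (h4 : FourthPointCondition X) {x y : X}
    (hxy : (betweennessGraph X).Adj x y) (z : X) :
    dist z x + dist x y = dist z y ∨ dist z y + dist y x = dist z x := by
  obtain ⟨p, hxpy, hypz, hzpx⟩ := h4.exists_median x y z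
  rcases eq_or_eq_of_adj_of_between hxy hxpy with rfl | rfl
  · left; rw [dist_comm z, dist_comm p y, dist_comm z y]; linarith
  · exact .inr hzpx

lemma between_of_adj_of_crossing (h4 : FourthPointCondition X) {a b x y : X}
    (hab : (betweennessGraph X).Adj a b) (hxy : x ≠ y)
    (ha : dist a x + dist x y = dist a y) (hb : dist b y + dist y x = dist b x) :
    dist b a + dist a x = dist b x := by
  obtain ⟨p, hapb, hbpx, hxpa⟩ := h4.exists_median a b x
  have hxy_pos := dist_pos.mpr hxy
  rcases eq_or_eq_of_adj_of_between hab hapb with rfl | rfl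
  · rw [dist_comm x p] at hxpa; linarith
  · linarith [dist_triangle a p y, dist_comm x p, dist_comm p a, dist_comm x a, dist_comm x y]

lemma eq_of_adj_of_crossing (htie : TieBreakingRule X) (h4 : FourthPointCondition X)
    {a b x y : X} (hab : (betweennessGraph X).Adj a b) (hxy : (betweennessGraph X).Adj x y)
    (ha : dist a x + dist x y = dist a y) (hb : dist b y + dist y x = dist b x) :
    a = x ∧ b = y := by
  have hbax := between_of_adj_of_crossing h4 hab hxy.ne ha hb
  have haby := between_of_adj_of_crossing h4 hab.symm hxy.ne.symm hb ha
  have hlen : dist a b = dist x y := by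
    linarith [dist_comm a b, dist_comm x y]
  have hpair : ({a, b} : Set X) = {x, y} := by
    by_contra hne; exact htie a b x y hab.ne hxy.ne hne hlen
  have hay : a ≠ y := by
    rintro rfl
    linarith [dist_self a, dist_comm a x, dist_pos.mpr hxy.ne]
  rcases Set.pair_eq_pair_iff.mp hpair with h | h
  · exact h
  · exact absurd h.1 hay

lemma mem_edges_of_crossing (htie : TieBreakingRule X) (h4 : FourthPointCondition X)
    {x y : X} (hxy : (betweennessGraph X).Adj x y) {a b : X} (W : (betweennessGraph X).Walk a b)
    (ha : dist a x + dist x y = dist a y) (hb : dist b y + dist y x = dist b x) :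
    s(x, y) ∈ W.edges := by
  induction W with
  | nil =>
    rw [dist_comm y x] at hb
    linarith [dist_pos.mpr hxy.ne]
  | @cons u v b huv W ih =>
    rw [SimpleGraph.Walk.edges_cons, List.mem_cons]
    rcases between_or_between_of_adj h4 hxy v with hv | hv
    · exact .inr (ih hv hb)
    · obtain ⟨rfl, rfl⟩ := eq_of_adj_of_crossing htie h4 huv hxy ha hv
      exact .inl rfl

lemma isAcyclic_betweennessGraph (htie : TieBreakingRule X) (h4 : FourthPointCondition X) :
    (betweennessGraph X).IsAcyclic := by
  rw [SimpleGraph.isAcyclic_iff_forall_adj_isBridge]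
  intro x y hxy
  rw [SimpleGraph.isBridge_iff, SimpleGraph.reachable_deleteEdges_iff_exists_walk]
  rintro ⟨W, hW⟩
  exact hW (mem_edges_of_crossing htie h4 hxy W (by simp) (by simp [dist_comm]))

lemma reachable_betweennessGraph [Finite X] (x y : X) : (betweennessGraph X).Reachable x y := by
  have wf : WellFounded (InvImage (· < ·) fun q : X × X => dist q.1 q.2) :=
    Finite.wellFounded_of_trans_of_irrefl _
  suffices ∀ q : X × X, (betweennessGraph X).Reachable q.1 q.2 from this (x, y)
  intro q
  induction q using wf.induction with
  | _ q ih =>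
    obtain ⟨x, y⟩ := q
    by_cases hxy : x = y
    · exact hxy ▸ SimpleGraph.Reachable.refl x
    by_cases hadj : (betweennessGraph X).Adj x y
    · exact hadj.reachable
    obtain ⟨p, hp, hpx, hpy⟩ : ∃ p, dist x p + dist p y = dist x y ∧ p ≠ x ∧ p ≠ y := by
      simpa [betweennessGraph, hxy, not_or] using hadj
    have hxp := dist_pos.mpr hpx.symm
    have hpy := dist_pos.mpr hpy
    exact (ih (x, p) (by simp only [InvImage]; linarith)).trans
      (ih (p, y) (by simp only [InvImage]; linarith))

lemma connected_betweennessGraph [Finite X] [Nonempty X] : (betweennessGraph X).Connected :=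
  (SimpleGraph.connected_iff _).mpr ⟨fun x y => reachable_betweennessGraph x y, ‹_›⟩

/-- Along a path each next vertex lies between the current one and the endpoint: otherwise
the rest of the path would have to cross back over the edge just used. -/
lemma sum_edgeLength_of_isPath (htie : TieBreakingRule X) (h4 : FourthPointCondition X)
    {x y : X} (W : (betweennessGraph X).Walk x y) (hW : W.IsPath) :
    (W.edges.map edgeLength).sum = dist x y := by
  induction W with
  | nil => simp
  | @cons u v y huv W ih =>
    rw [SimpleGraph.Walk.cons_isPath_iff] at hW
    rw [SimpleGraph.Walk.edges_cons, List.map_cons, List.sum_cons, edgeLength_mk, ih hW.1]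
    rcases between_or_between_of_adj h4 huv y with hy | hy
    · have huv_mem := mem_edges_of_crossing htie h4 huv W.reverse hy (by simp [dist_comm])
      rw [SimpleGraph.Walk.edges_reverse, List.mem_reverse] at huv_mem
      exact absurd (W.fst_mem_support_of_mem_edges huv_mem) hW.2
    · rw [dist_comm y, dist_comm y, dist_comm v u] at hy; linarith

end TreeRealisation

open TreeRealisation in
/-- A finite metric space satisfying the tie-breaking rule and the fourth-point
condition is realised by a fully labelled positively weighted tree on the same
point set. -/
theorem exists_realising_tree_of_tieBreaking_fourthPointCondition
    {X : Type*} [MetricSpace X] [Fintype X] [Nonempty X]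
    (htie : TieBreakingRule X) (h4 : FourthPointCondition X) :
    ∃ (T : SimpleGraph X) (w : Sym2 X → ℝ), T.IsTree ∧
      (∀ e ∈ T.edgeSet, 0 < w e) ∧
      ∀ (x y : X) (W : T.Walk x y), W.IsPath → (W.edges.map w).sum = dist x y :=
  ⟨betweennessGraph X, edgeLength,
    ⟨connected_betweennessGraph, isAcyclic_betweennessGraph htie h4⟩,
    edgeLength_pos, fun _ _ W hW => sum_edgeLength_of_isPath htie h4 W hW⟩
end
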